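/- arXiv:2011.01322 — 5 statements merged into one kernel-verified Lean document; each statement's English description precedes it below -/
import Mathlib

section
/- Let N ≥ 2 be an integer, let λ be a nonzero real number, and let φ ∈ L²(ℝ^{N-1}; ℂ). Then ∫_{ℝ^{N-1}} ∫_{0}^{∞} ( |ξ'|²/(λ² + |ξ'|²) + 1 ) · exp(−2 x_N √(λ² + |ξ'|²)) · |φ(ξ')|² dx_N dξ' = (1/2) ∫_{ℝ^{N-1}} (λ² + 2|ξ'|²) (λ² + |ξ'|²)^{-3/2} |φ(ξ')|² dξ', and this quantity is at most |λ|^{-1} ∫_{ℝ^{N-1}} |φ(ξ')|² dξ'. -/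
/-!
Integrating the Fourier symbol first in the normal variable, `∫₀^∞ e^{-2 t √(λ² + |ξ|²)} dt`
equals `1 / (2 √(λ² + |ξ|²))`, which turns the left-hand side into the stated multiplier
`(λ² + 2|ξ|²) / (2 (λ² + |ξ|²)^{3/2})`. Since `λ² + 2|ξ|² ≤ 2 (λ² + |ξ|²)`, that multiplier is at
most `(λ² + |ξ|²)^{-1/2} ≤ |λ|⁻¹`, uniformly in `ξ`.
-/

open MeasureTheory ENNReal Real

theorem lintegral_Ioi_ofReal_exp_mul {a : ℝ} (ha : a < 0) :
    ∫⁻ t in Set.Ioi (0 : ℝ), ENNReal.ofReal (exp (a * t)) = ENNReal.ofReal (-a)⁻¹ := by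
  rw [← ofReal_integral_eq_lintegral_ofReal (integrableOn_exp_mul_Ioi ha 0)
    (Filter.Eventually.of_forall fun t => (exp_pos _).le), integral_exp_mul_Ioi ha]
  simp [div_eq_mul_inv, ← inv_neg]

theorem lintegral_Ioi_ofReal_mul_exp_mul {A B c : ℝ} (hA : 0 ≤ A) (hB : 0 ≤ B) (hc : 0 < c) :
    ∫⁻ t in Set.Ioi (0 : ℝ), ENNReal.ofReal (A * exp (-2 * t * c) * B) =
      ENNReal.ofReal (A / (2 * c) * B) := by
  have hAB : 0 ≤ A * B := mul_nonneg hA hB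
  calc ∫⁻ t in Set.Ioi (0 : ℝ), ENNReal.ofReal (A * exp (-2 * t * c) * B)
      = ∫⁻ t in Set.Ioi (0 : ℝ), ENNReal.ofReal (A * B) * ENNReal.ofReal (exp (-(2 * c) * t)) := by
        refine lintegral_congr fun t => ?_
        rw [← ENNReal.ofReal_mul hAB]
        ring_nf
    _ = ENNReal.ofReal (A * B) * ENNReal.ofReal (2 * c)⁻¹ := by
        rw [lintegral_const_mul' _ _ ofReal_ne_top,
          lintegral_Ioi_ofReal_exp_mul (by linarith), neg_neg]
    _ = ENNReal.ofReal (A / (2 * c) * B) := by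
        rw [← ENNReal.ofReal_mul hAB]
        ring_nf

theorem div_two_mul_sqrt_eq_half_mul_rpow {a s : ℝ} (h : 0 < a + s) :
    (s / (a + s) + 1) / (2 * √(a + s)) = 1 / 2 * ((a + 2 * s) * (a + s) ^ (-(3 : ℝ) / 2)) := by
  have hrpow : (a + s) ^ (-(3 : ℝ) / 2) = ((a + s) * √(a + s))⁻¹ := by
    rw [show (-(3 : ℝ) / 2) = -(1 + 1 / 2) by norm_num, rpow_neg h.le, rpow_add h, Real.rpow_one,
      ← sqrt_eq_rpow]
  have hsqrt : 0 < √(a + s) := sqrt_pos.mpr h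
  rw [hrpow]
  field_simp
  ring

theorem half_mul_rpow_le_inv_sqrt {a s : ℝ} (ha : 0 < a) (hs : 0 ≤ s) :
    1 / 2 * ((a + 2 * s) * (a + s) ^ (-(3 : ℝ) / 2)) ≤ (√a)⁻¹ := by
  have h : 0 < a + s := by linarith
  calc 1 / 2 * ((a + 2 * s) * (a + s) ^ (-(3 : ℝ) / 2))
      ≤ (a + s) * (a + s) ^ (-(3 : ℝ) / 2) := by
        nlinarith [rpow_pos_of_pos h (-(3 : ℝ) / 2)]
    _ = (a + s) ^ (-(1 / 2 : ℝ)) := by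
        rw [← rpow_one_add' h.le (by norm_num)]
        norm_num
    _ ≤ a ^ (-(1 / 2 : ℝ)) := rpow_le_rpow_of_nonpos ha (by linarith) (by norm_num)
    _ = (√a)⁻¹ := by rw [rpow_neg ha.le, ← sqrt_eq_rpow]

theorem halfspace_neumann_gradient_L2_norm_general (N : ℕ) (lam : ℝ) (hlam : lam ≠ 0)
    (φ : EuclideanSpace ℝ (Fin (N - 1)) → ℂ) :
    (∫⁻ ξ, ∫⁻ t in Set.Ioi (0 : ℝ),
        ENNReal.ofReal ((‖ξ‖ ^ 2 / (lam ^ 2 + ‖ξ‖ ^ 2) + 1) *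
          Real.exp (-2 * t * Real.sqrt (lam ^ 2 + ‖ξ‖ ^ 2)) * ‖φ ξ‖ ^ 2)) =
      (∫⁻ ξ, ENNReal.ofReal
        ((1 / 2) * ((lam ^ 2 + 2 * ‖ξ‖ ^ 2) * (lam ^ 2 + ‖ξ‖ ^ 2) ^ (-(3 : ℝ) / 2)) *
          ‖φ ξ‖ ^ 2)) ∧
    (∫⁻ ξ, ENNReal.ofReal
        ((1 / 2) * ((lam ^ 2 + 2 * ‖ξ‖ ^ 2) * (lam ^ 2 + ‖ξ‖ ^ 2) ^ (-(3 : ℝ) / 2)) *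
          ‖φ ξ‖ ^ 2)) ≤
      ENNReal.ofReal (|lam|⁻¹) * ∫⁻ ξ, ENNReal.ofReal (‖φ ξ‖ ^ 2) := by
  have hlam2 : 0 < lam ^ 2 := by positivity
  constructor
  · refine lintegral_congr fun ξ => ?_
    have h : 0 < lam ^ 2 + ‖ξ‖ ^ 2 := by positivity
    rw [lintegral_Ioi_ofReal_mul_exp_mul (by positivity) (by positivity) (sqrt_pos.mpr h),
      div_two_mul_sqrt_eq_half_mul_rpow h]
  · rw [← lintegral_const_mul' _ _ ofReal_ne_top]
    refine lintegral_mono fun ξ => ?_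
    rw [← ENNReal.ofReal_mul (by positivity), ← sqrt_sq_eq_abs]
    gcongr
    exact half_mul_rpow_le_inv_sqrt hlam2 (by positivity)

/-- Squared L² norm of the gradient of the explicit half-space Neumann Helmholtz
solution, computed via Plancherel, with the resulting `|λ|^{-1}` bound. -/
theorem halfspace_neumann_gradient_L2_norm (N : ℕ) (hN : 2 ≤ N) (lam : ℝ) (hlam : lam ≠ 0)
    (φ : EuclideanSpace ℝ (Fin (N - 1)) → ℂ) (hφ : MemLp φ 2) :
    (∫⁻ ξ, ∫⁻ t in Set.Ioi (0 : ℝ),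
        ENNReal.ofReal ((‖ξ‖ ^ 2 / (lam ^ 2 + ‖ξ‖ ^ 2) + 1) *
          Real.exp (-2 * t * Real.sqrt (lam ^ 2 + ‖ξ‖ ^ 2)) * ‖φ ξ‖ ^ 2)) =
      (∫⁻ ξ, ENNReal.ofReal
        ((1 / 2) * ((lam ^ 2 + 2 * ‖ξ‖ ^ 2) * (lam ^ 2 + ‖ξ‖ ^ 2) ^ (-(3 : ℝ) / 2)) *
          ‖φ ξ‖ ^ 2)) ∧
    (∫⁻ ξ, ENNReal.ofReal
        ((1 / 2) * ((lam ^ 2 + 2 * ‖ξ‖ ^ 2) * (lam ^ 2 + ‖ξ‖ ^ 2) ^ (-(3 : ℝ) / 2)) *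
          ‖φ ξ‖ ^ 2)) ≤
      ENNReal.ofReal (|lam|⁻¹) * ∫⁻ ξ, ENNReal.ofReal (‖φ ξ‖ ^ 2) :=
  halfspace_neumann_gradient_L2_norm_general N lam hlam φ
end

section
/- Let N ≥ 2 be an integer, let λ be a nonzero real number, and let φ ∈ L²(ℝ^{N-1}; ℂ). Then λ² ∫_{ℝ^{N-1}} ∫_{0}^{∞} x_N · (λ² + 2|ξ'|²) (λ² + |ξ'|²)^{-1} · exp(−2 x_N √(λ² + |ξ'|²)) · |φ(ξ')|² dx_N dξ' ≤ (1/2) ∫_{ℝ^{N-1}} |φ(ξ')|² dξ'. -/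
open MeasureTheory ENNReal Real

/-! For fixed `ξ'`, the `x_N`-integral is explicit: `∫₀^∞ t e^{-2t√m} dt = 1 / (4m)` with
`m = λ² + |ξ'|²`. The estimate then holds pointwise in `ξ'`, because
`λ² (λ² + 2|ξ'|²) ≤ 2 (λ² + |ξ'|²)²`. -/

theorem integral_Ioi_mul_exp_neg_mul {b : ℝ} (hb : 0 < b) :
    ∫ t in Set.Ioi (0 : ℝ), t * exp (-(b * t)) = 1 / b ^ 2 := by
  have h := integral_rpow_mul_exp_neg_mul_Ioi two_pos hb
  norm_num [Gamma_two] at h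
  rw [h, one_div]

theorem lintegral_Ioi_mul_exp_neg_mul {b : ℝ} (hb : 0 < b) :
    ∫⁻ t in Set.Ioi (0 : ℝ), ENNReal.ofReal (t * exp (-(b * t))) =
      ENNReal.ofReal (1 / b ^ 2) := by
  have h := integral_Ioi_mul_exp_neg_mul hb
  rw [← h, ofReal_integral_eq_lintegral_ofReal]
  · exact .of_integral_ne_zero (by rw [h]; positivity)
  · filter_upwards [ae_restrict_mem measurableSet_Ioi] with t ht
    exact mul_nonneg ht.le (exp_pos _).le

theorem lintegral_Ioi_mul_exp_neg_two_mul_sqrt {m : ℝ} (hm : 0 < m) (c a : ℝ) :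
    ∫⁻ t in Set.Ioi (0 : ℝ), ENNReal.ofReal (t * c * exp (-2 * t * √m) * a) =
      ENNReal.ofReal (c * a / (4 * m)) := calc
  _ = ∫⁻ t in Set.Ioi (0 : ℝ),
        ENNReal.ofReal (t * exp (-(2 * √m * t))) * ENNReal.ofReal (c * a) := by
    refine setLIntegral_congr_fun measurableSet_Ioi fun t ht => ?_
    rw [← ENNReal.ofReal_mul (mul_nonneg (Set.mem_Ioi.1 ht).le (exp_pos _).le)]
    ring_nf
  _ = ENNReal.ofReal (1 / (2 * √m) ^ 2) * ENNReal.ofReal (c * a) := by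
    rw [lintegral_mul_const' _ _ ofReal_ne_top, lintegral_Ioi_mul_exp_neg_mul (by positivity)]
  _ = ENNReal.ofReal (c * a / (4 * m)) := by
    rw [← ENNReal.ofReal_mul (by positivity), mul_pow, sq_sqrt hm.le]
    ring_nf

theorem mul_add_two_mul_div_le_half {l s : ℝ} (hl : 0 < l) (hs : 0 ≤ s) :
    l * ((l + 2 * s) * (l + s)⁻¹) / (4 * (l + s)) ≤ 1 / 2 := by
  have hls : 0 < l + s := by positivity
  rw [div_le_iff₀ (by positivity), ← div_eq_mul_inv, mul_div_assoc', div_le_iff₀ hls]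
  nlinarith

theorem halfspace_neumann_weighted_gradient_general (N : ℕ) (lam : ℝ) (hlam : lam ≠ 0)
    (φ : EuclideanSpace ℝ (Fin (N - 1)) → ℂ) :
    ENNReal.ofReal (lam ^ 2) *
      (∫⁻ ξ, ∫⁻ t in Set.Ioi (0 : ℝ),
        ENNReal.ofReal (t * ((lam ^ 2 + 2 * ‖ξ‖ ^ 2) * (lam ^ 2 + ‖ξ‖ ^ 2)⁻¹) *
          Real.exp (-2 * t * Real.sqrt (lam ^ 2 + ‖ξ‖ ^ 2)) * ‖φ ξ‖ ^ 2)) ≤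
      ENNReal.ofReal (1 / 2) * ∫⁻ ξ, ENNReal.ofReal (‖φ ξ‖ ^ 2) := by
  rw [← lintegral_const_mul' _ _ ofReal_ne_top, ← lintegral_const_mul' _ _ ofReal_ne_top]
  refine lintegral_mono fun ξ => ?_
  have hlam2 : 0 < lam ^ 2 := by positivity
  rw [lintegral_Ioi_mul_exp_neg_two_mul_sqrt (by positivity), ← ENNReal.ofReal_mul hlam2.le,
    ← ENNReal.ofReal_mul (by norm_num)]
  refine ENNReal.ofReal_le_ofReal ?_
  calc lam ^ 2 * ((lam ^ 2 + 2 * ‖ξ‖ ^ 2) * (lam ^ 2 + ‖ξ‖ ^ 2)⁻¹ * ‖φ ξ‖ ^ 2 /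
        (4 * (lam ^ 2 + ‖ξ‖ ^ 2)))
      = lam ^ 2 * ((lam ^ 2 + 2 * ‖ξ‖ ^ 2) * (lam ^ 2 + ‖ξ‖ ^ 2)⁻¹) /
          (4 * (lam ^ 2 + ‖ξ‖ ^ 2)) * ‖φ ξ‖ ^ 2 := by ring
    _ ≤ 1 / 2 * ‖φ ξ‖ ^ 2 :=
      mul_le_mul_of_nonneg_right (mul_add_two_mul_div_le_half hlam2 (sq_nonneg _)) (sq_nonneg _)

/-- Weighted gradient estimate `|λ|² ‖√x_N ∇u‖² ≤ (1/2)‖h‖²` for the explicit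
half-space Neumann Helmholtz solution, on the Fourier side. -/
theorem halfspace_neumann_weighted_gradient (N : ℕ) (hN : 2 ≤ N) (lam : ℝ) (hlam : lam ≠ 0)
    (φ : EuclideanSpace ℝ (Fin (N - 1)) → ℂ) (hφ : MemLp φ 2) :
    ENNReal.ofReal (lam ^ 2) *
      (∫⁻ ξ, ∫⁻ t in Set.Ioi (0 : ℝ),
        ENNReal.ofReal (t * ((lam ^ 2 + 2 * ‖ξ‖ ^ 2) * (lam ^ 2 + ‖ξ‖ ^ 2)⁻¹) *
          Real.exp (-2 * t * Real.sqrt (lam ^ 2 + ‖ξ‖ ^ 2)) * ‖φ ξ‖ ^ 2)) ≤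
      ENNReal.ofReal (1 / 2) * ∫⁻ ξ, ENNReal.ofReal (‖φ ξ‖ ^ 2) :=
  halfspace_neumann_weighted_gradient_general N lam hlam φ
end

section
/- Let N ≥ 2 be an integer, let λ be a nonzero real number, and let ψ ∈ L²(ℝ^{N-1}; ℂ). Then ∫_{ℝ^{N-1}} ∫_{0}^{∞} (λ² + 2|ξ'|²) · exp(−2 x_N √(λ² + |ξ'|²)) · |ψ(ξ')|² dx_N dξ' = (1/2) ∫_{ℝ^{N-1}} (λ² + 2|ξ'|²)(λ² + |ξ'|²)^{-1/2} |ψ(ξ')|² dξ', and this quantity is at most (1/2) ∫_{ℝ^{N-1}} ( |λ| + |ξ'| + |λ|^{-1}|ξ'|² ) |ψ(ξ')|² dξ'. -/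
open MeasureTheory ENNReal Real

/-!
With `s = √(λ² + |ξ'|²)`, the inner integral of `e^{-2 t s}` over `t > 0` is `1 / (2 s)`, which
gives the identity. For the bound, split `(λ² + 2|ξ'|²) / s = s + |ξ'|² / s` and use
`|λ| ≤ s ≤ |λ| + |ξ'|`.
-/

lemma lintegral_Ioi_ofReal_mul_exp_neg_mul {b c : ℝ} (hb : 0 < b) (hc : 0 ≤ c) :
    ∫⁻ t in Set.Ioi (0 : ℝ), ENNReal.ofReal (c * exp (-b * t)) = ENNReal.ofReal (c / b) := by
  have hint : IntegrableOn (fun t => c * exp (-b * t)) (Set.Ioi 0) :=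
    (integrableOn_exp_mul_Ioi (neg_lt_zero.2 hb) 0).const_mul c
  rw [← ofReal_integral_eq_lintegral_ofReal hint (.of_forall fun t => by positivity),
    integral_const_mul, integral_exp_mul_Ioi (neg_lt_zero.2 hb)]
  simp [div_eq_mul_inv]

lemma rpow_neg_one_half_eq_inv_sqrt {x : ℝ} (hx : 0 ≤ x) : x ^ (-(1 : ℝ) / 2) = (√x)⁻¹ := by
  rw [neg_div, rpow_neg hx, sqrt_eq_rpow]

lemma abs_le_sqrt_sq_add_sq (a r : ℝ) : |a| ≤ √(a ^ 2 + r ^ 2) :=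
  abs_le_sqrt (by nlinarith)

lemma sqrt_sq_add_sq_le_abs_add {a r : ℝ} (hr : 0 ≤ r) : √(a ^ 2 + r ^ 2) ≤ |a| + r := by
  rw [sqrt_le_left (by positivity), add_sq, sq_abs]
  nlinarith [abs_nonneg a]

lemma div_sqrt_sq_add_sq_le {a r : ℝ} (ha : a ≠ 0) (hr : 0 ≤ r) :
    (a ^ 2 + 2 * r ^ 2) / √(a ^ 2 + r ^ 2) ≤ |a| + r + |a|⁻¹ * r ^ 2 := by
  set s := √(a ^ 2 + r ^ 2)
  have ha' : 0 < |a| := abs_pos.2 ha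
  have hs : 0 < s := ha'.trans_le (abs_le_sqrt_sq_add_sq a r)
  have hsplit : (a ^ 2 + 2 * r ^ 2) / s = s + r ^ 2 / s := by
    field_simp
    rw [sq_sqrt (by positivity)]
    ring
  have hquot : r ^ 2 / s ≤ |a|⁻¹ * r ^ 2 := by
    rw [inv_mul_eq_div]
    exact div_le_div_of_nonneg_left (by positivity) ha' (abs_le_sqrt_sq_add_sq a r)
  linarith [sqrt_sq_add_sq_le_abs_add (a := a) hr]

theorem halfspace_dirichlet_gradient_L2_norm_general (N : ℕ)
    (lam : ℝ) (hlam : lam ≠ 0)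
    (ψ : EuclideanSpace ℝ (Fin (N - 1)) → ℂ) :
    (∫⁻ ξ, ∫⁻ t in Set.Ioi (0 : ℝ),
        ENNReal.ofReal ((lam ^ 2 + 2 * ‖ξ‖ ^ 2) *
          Real.exp (-2 * t * Real.sqrt (lam ^ 2 + ‖ξ‖ ^ 2)) * ‖ψ ξ‖ ^ 2)) =
      (∫⁻ ξ, ENNReal.ofReal
        ((1 / 2) * ((lam ^ 2 + 2 * ‖ξ‖ ^ 2) * (lam ^ 2 + ‖ξ‖ ^ 2) ^ (-(1 : ℝ) / 2)) *
          ‖ψ ξ‖ ^ 2)) ∧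
    (∫⁻ ξ, ENNReal.ofReal
        ((1 / 2) * ((lam ^ 2 + 2 * ‖ξ‖ ^ 2) * (lam ^ 2 + ‖ξ‖ ^ 2) ^ (-(1 : ℝ) / 2)) *
          ‖ψ ξ‖ ^ 2)) ≤
      ENNReal.ofReal (1 / 2) *
        ∫⁻ ξ, ENNReal.ofReal ((|lam| + ‖ξ‖ + |lam|⁻¹ * ‖ξ‖ ^ 2) * ‖ψ ξ‖ ^ 2) := by
  constructor
  · refine lintegral_congr fun ξ => ?_
    have hs : 0 < √(lam ^ 2 + ‖ξ‖ ^ 2) := by positivity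
    have hexp : ∀ t, -2 * t * √(lam ^ 2 + ‖ξ‖ ^ 2) = -(2 * √(lam ^ 2 + ‖ξ‖ ^ 2)) * t :=
      fun t => by ring
    simp_rw [mul_right_comm _ (exp _), hexp]
    rw [lintegral_Ioi_ofReal_mul_exp_neg_mul (by positivity) (by positivity),
      rpow_neg_one_half_eq_inv_sqrt (by positivity)]
    congr 1
    field_simp
  · rw [← lintegral_const_mul' _ _ ofReal_ne_top]
    refine lintegral_mono fun ξ => ?_
    rw [mul_assoc, ENNReal.ofReal_mul (by norm_num),
      rpow_neg_one_half_eq_inv_sqrt (by positivity), ← div_eq_mul_inv]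
    gcongr
    exact div_sqrt_sq_add_sq_le hlam (norm_nonneg ξ)

/-- Squared L² norm of the gradient of the explicit half-space Dirichlet
Helmholtz solution, computed via Plancherel, with the resulting bound in terms
of `|λ|`, `|ξ'|` and `|λ|⁻¹|ξ'|²`. -/
theorem halfspace_dirichlet_gradient_L2_norm (N : ℕ) (hN : 2 ≤ N)
    (lam : ℝ) (hlam : lam ≠ 0)
    (ψ : EuclideanSpace ℝ (Fin (N - 1)) → ℂ) (hψ : MemLp ψ 2) :
    (∫⁻ ξ, ∫⁻ t in Set.Ioi (0 : ℝ),
        ENNReal.ofReal ((lam ^ 2 + 2 * ‖ξ‖ ^ 2) *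
          Real.exp (-2 * t * Real.sqrt (lam ^ 2 + ‖ξ‖ ^ 2)) * ‖ψ ξ‖ ^ 2)) =
      (∫⁻ ξ, ENNReal.ofReal
        ((1 / 2) * ((lam ^ 2 + 2 * ‖ξ‖ ^ 2) * (lam ^ 2 + ‖ξ‖ ^ 2) ^ (-(1 : ℝ) / 2)) *
          ‖ψ ξ‖ ^ 2)) ∧
    (∫⁻ ξ, ENNReal.ofReal
        ((1 / 2) * ((lam ^ 2 + 2 * ‖ξ‖ ^ 2) * (lam ^ 2 + ‖ξ‖ ^ 2) ^ (-(1 : ℝ) / 2)) *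
          ‖ψ ξ‖ ^ 2)) ≤
      ENNReal.ofReal (1 / 2) *
        ∫⁻ ξ, ENNReal.ofReal ((|lam| + ‖ξ‖ + |lam|⁻¹ * ‖ξ‖ ^ 2) * ‖ψ ξ‖ ^ 2) :=
  halfspace_dirichlet_gradient_L2_norm_general N lam hlam ψ
end

section
/- For every C₀ > 0 and ω > 0 there exists a constant C > 0, depending only on C₀ and ω, such that for all real λ ≥ ω and all nonnegative reals A, B, H satisfying A² + λB² ≤ C₀ (A^{1/2} B^{1/2} + B) H, one has λ^{3/4} B + λ^{1/4} A ≤ C H. -/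
/-!
Put `t = λ^{1/4}` and `S = t³B + tA`. Then `S² ≤ 2t²(A² + t⁴B²)`, so the hypothesis bounds `S²` by
`C₀ H · 2t²(√(AB) + B)`. Young's inequality `2t²√(AB) ≤ tA + t³B` and `t²B ≤ ω^{-1/4} t³B` bound
both terms by multiples of `S`, and dividing `S² ≤ C₀(1 + 2ω^{-1/4}) H S` by `S` gives the claim.
-/

namespace NeumannStep1

lemma le_of_sq_le_mul_self {S K : ℝ} (hS : 0 ≤ S) (hK : 0 ≤ K) (h : S ^ 2 ≤ K * S) : S ≤ K := by
  rcases hS.eq_or_lt with rfl | hpos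
  · exact hK
  · nlinarith

lemma two_mul_sq_mul_sqrt_mul_le {t A B : ℝ} (ht : 0 ≤ t) (hA : 0 ≤ A) (hB : 0 ≤ B) :
    2 * t ^ 2 * (A ^ ((1 : ℝ) / 2) * B ^ ((1 : ℝ) / 2)) ≤ t * A + t ^ 3 * B := by
  set u := A ^ ((1 : ℝ) / 2)
  set v := B ^ ((1 : ℝ) / 2)
  have hu : u ^ 2 = A := by rw [← Real.rpow_mul_natCast hA]; norm_num
  have hv : v ^ 2 = B := by rw [← Real.rpow_mul_natCast hB]; norm_num
  rw [← hu, ← hv]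
  nlinarith [mul_nonneg ht (sq_nonneg (u - t * v))]

lemma weighted_sum_le_of_quartic_bound {C₀ s t A B H : ℝ} (hC₀ : 0 ≤ C₀) (hs : 0 < s)
    (hst : s ≤ t) (hA : 0 ≤ A) (hB : 0 ≤ B) (hH : 0 ≤ H)
    (h : A ^ 2 + t ^ 4 * B ^ 2 ≤ C₀ * (A ^ ((1 : ℝ) / 2) * B ^ ((1 : ℝ) / 2) + B) * H) :
    t ^ 3 * B + t * A ≤ C₀ * (1 + 2 / s) * H := by
  have ht : 0 ≤ t := hs.le.trans hst
  set S := t ^ 3 * B + t * A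
  have hS : 0 ≤ S := by positivity
  have hsq : S ^ 2 ≤ 2 * t ^ 2 * (A ^ 2 + t ^ 4 * B ^ 2) := by
    nlinarith [sq_nonneg (t * A - t ^ 3 * B)]
  have hmixed : 2 * t ^ 2 * (A ^ ((1 : ℝ) / 2) * B ^ ((1 : ℝ) / 2)) ≤ S := by
    linarith [two_mul_sq_mul_sqrt_mul_le ht hA hB]
  have hlinear : 2 * t ^ 2 * B ≤ 2 / s * S := by
    have : s * (t ^ 2 * B) ≤ S := by nlinarith [mul_nonneg (mul_nonneg ht ht) hB]
    rw [div_mul_eq_mul_div, le_div_iff₀ hs]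
    linarith
  have hCH : 0 ≤ C₀ * H := mul_nonneg hC₀ hH
  refine le_of_sq_le_mul_self hS (by positivity) ?_
  calc S ^ 2 ≤ 2 * t ^ 2 * (A ^ 2 + t ^ 4 * B ^ 2) := hsq
    _ ≤ 2 * t ^ 2 * (C₀ * (A ^ ((1 : ℝ) / 2) * B ^ ((1 : ℝ) / 2) + B) * H) := by gcongr
    _ = C₀ * H * (2 * t ^ 2 * (A ^ ((1 : ℝ) / 2) * B ^ ((1 : ℝ) / 2)) + 2 * t ^ 2 * B) := by
      ring
    _ ≤ C₀ * H * (S + 2 / s * S) := by gcongr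
    _ = C₀ * (1 + 2 / s) * H * S := by ring

end NeumannStep1

open NeumannStep1 in
/-- Real-number lemma behind Step 1 of the Neumann resolvent estimate:
from `A² + λB² ≤ C₀(A^{1/2}B^{1/2} + B)H` one gets
`λ^{3/4} B + λ^{1/4} A ≤ C H` with `C` depending only on `C₀` and `ω`. -/
theorem neumann_step1_lemma (C₀ ω : ℝ) (hC₀ : 0 < C₀) (hω : 0 < ω) :
    ∃ C > (0 : ℝ), ∀ lam A B H : ℝ, ω ≤ lam → 0 ≤ A → 0 ≤ B → 0 ≤ H →
      A ^ 2 + lam * B ^ 2 ≤ C₀ * (A ^ ((1 : ℝ) / 2) * B ^ ((1 : ℝ) / 2) + B) * H →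
      lam ^ ((3 : ℝ) / 4) * B + lam ^ ((1 : ℝ) / 4) * A ≤ C * H := by
  have hs : 0 < ω ^ ((1 : ℝ) / 4) := Real.rpow_pos_of_pos hω _
  refine ⟨C₀ * (1 + 2 / ω ^ ((1 : ℝ) / 4)), by positivity, ?_⟩
  intro lam A B H hlam hA hB hH h
  have hlam0 : 0 ≤ lam := hω.le.trans hlam
  have hst : ω ^ ((1 : ℝ) / 4) ≤ lam ^ ((1 : ℝ) / 4) := Real.rpow_le_rpow hω.le hlam (by norm_num)
  have h4 : (lam ^ ((1 : ℝ) / 4)) ^ 4 = lam := by rw [← Real.rpow_mul_natCast hlam0]; norm_num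
  have h3 : (lam ^ ((1 : ℝ) / 4)) ^ 3 = lam ^ ((3 : ℝ) / 4) := by
    rw [← Real.rpow_mul_natCast hlam0]; norm_num
  rw [← h4] at h
  rw [← h3]
  exact weighted_sum_le_of_quartic_bound hC₀.le hs hst hA hB hH h
end

section
/- For every C₀ > 0, ω > 0 and every real number r < 1/2, there exists a constant C_r > 0, depending only on C₀, ω and r, such that for all real λ ≥ ω and all nonnegative reals A, B, G, H satisfying (i) A² + λB² ≤ C₀ G H, (ii) G ≤ C₀ (A^{1/2} B^{1/2} + B), and (iii) λ² B² ≤ A² + G H, one has λ^{3r} B + λ^{r} A + λ^{2r} G ≤ C_r H. -/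
/-!
No iteration is needed: the fixed point of the iteration is reached at once. Squaring (ii) and
multiplying by `λ` gives `λ G² ≲ λ A B + λ B²`, and both terms are `≲ G H` by (i) and (iii)
(using `2 A (λ B) ≤ A² + (λ B)²` and `λ ≥ ω`). Hence `λ G² ≲ G H`, i.e. `λ G ≲ H`. Feeding this
back into (i) and (iii) gives `λ^{1/2} A ≲ H` and `λ^{3/2} B ≲ H`, which is the estimate for
`r = 1/2`; smaller `r` follow from `λ^{k r} ≤ ω^{k (r - 1/2)} λ^{k/2}`.
-/

open Real

theorem le_sqrt_mul_of_sq_le_mul_sq {x y k : ℝ} (hx : 0 ≤ x) (hy : 0 ≤ y)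
    (h : x ^ 2 ≤ k * y ^ 2) : x ≤ √k * y :=
  calc x = √(x ^ 2) := (sqrt_sq hx).symm
    _ ≤ √(k * y ^ 2) := sqrt_le_sqrt h
    _ = √k * y := by rw [sqrt_mul' k (sq_nonneg y), sqrt_sq hy]

theorem rpow_mul_le_of_rpow_mul_le {ω lam p q x y : ℝ} (hω : 0 < ω) (hlam : ω ≤ lam)
    (hpq : p ≤ q) (hx : 0 ≤ x) (h : lam ^ q * x ≤ y) : lam ^ p * x ≤ ω ^ (p - q) * y := by
  have hlam₀ : 0 < lam := hω.trans_le hlam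
  calc lam ^ p * x = lam ^ (p - q) * (lam ^ q * x) := by
        rw [← mul_assoc, ← rpow_add hlam₀, sub_add_cancel]
    _ ≤ ω ^ (p - q) * (lam ^ q * x) :=
        mul_le_mul_of_nonneg_right (rpow_le_rpow_of_nonpos hω hlam (by linarith))
          (by positivity)
    _ ≤ ω ^ (p - q) * y := mul_le_mul_of_nonneg_left h (by positivity)

structure NeumannInequalities (C₀ lam A B G H : ℝ) : Prop where
  A_nonneg : 0 ≤ A
  B_nonneg : 0 ≤ B
  G_nonneg : 0 ≤ G
  H_nonneg : 0 ≤ H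
  energy : A ^ 2 + lam * B ^ 2 ≤ C₀ * G * H
  trace : G ≤ C₀ * (A ^ ((1 : ℝ) / 2) * B ^ ((1 : ℝ) / 2) + B)
  modulus : lam ^ 2 * B ^ 2 ≤ A ^ 2 + G * H

namespace NeumannInequalities

variable {C₀ ω lam A B G H : ℝ}

theorem sq_A_le (h : NeumannInequalities C₀ lam A B G H) (hlam : 0 ≤ lam) :
    A ^ 2 ≤ C₀ * G * H := by
  linarith [h.energy, mul_nonneg hlam (sq_nonneg B)]

theorem sq_lam_mul_B_le (h : NeumannInequalities C₀ lam A B G H) (hlam : 0 ≤ lam) :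
    (lam * B) ^ 2 ≤ (C₀ + 1) * G * H := by
  linarith [h.modulus, h.sq_A_le hlam]

theorem sq_G_le (h : NeumannInequalities C₀ lam A B G H) :
    G ^ 2 ≤ 2 * C₀ ^ 2 * (A * B + B ^ 2) := by
  have hAB : (A ^ ((1 : ℝ) / 2) * B ^ ((1 : ℝ) / 2)) ^ 2 = A * B := by
    rw [← sqrt_eq_rpow, ← sqrt_eq_rpow, mul_pow, sq_sqrt h.A_nonneg, sq_sqrt h.B_nonneg]
  calc G ^ 2 ≤ (C₀ * (A ^ ((1 : ℝ) / 2) * B ^ ((1 : ℝ) / 2) + B)) ^ 2 :=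
        pow_le_pow_left₀ h.G_nonneg h.trace 2
    _ ≤ 2 * C₀ ^ 2 * (A * B + B ^ 2) := by
        rw [mul_pow, ← hAB]
        linarith [mul_le_mul_of_nonneg_left
          (add_sq_le (a := A ^ ((1 : ℝ) / 2) * B ^ ((1 : ℝ) / 2)) (b := B)) (sq_nonneg C₀)]

theorem lam_mul_G_le (h : NeumannInequalities C₀ lam A B G H) (hC₀ : 0 ≤ C₀) (hω : 0 < ω)
    (hlam : ω ≤ lam) : lam * G ≤ C₀ ^ 2 * (2 * C₀ + 1 + 2 * (C₀ + 1) / ω) * H := by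
  have hlam₀ : 0 ≤ lam := hω.le.trans hlam
  have hAB : lam * (A * B) ≤ (2 * C₀ + 1) / 2 * G * H := by
    linarith [two_mul_le_add_sq A (lam * B), h.sq_A_le hlam₀, h.sq_lam_mul_B_le hlam₀]
  have hBB : lam * B ^ 2 ≤ (C₀ + 1) / ω * (G * H) := by
    rw [div_mul_eq_mul_div, le_div_iff₀ hω]
    linarith [mul_le_mul_of_nonneg_right hlam (mul_nonneg hlam₀ (sq_nonneg B)),
      h.sq_lam_mul_B_le hlam₀]
  have hGG : lam * G ^ 2 ≤ C₀ ^ 2 * (2 * C₀ + 1 + 2 * (C₀ + 1) / ω) * H * G :=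
    calc lam * G ^ 2 ≤ 2 * C₀ ^ 2 * (lam * (A * B) + lam * B ^ 2) := by
          linarith [mul_le_mul_of_nonneg_left h.sq_G_le hlam₀]
      _ ≤ 2 * C₀ ^ 2 * ((2 * C₀ + 1) / 2 * G * H + (C₀ + 1) / ω * (G * H)) := by
          gcongr
      _ = C₀ ^ 2 * (2 * C₀ + 1 + 2 * (C₀ + 1) / ω) * H * G := by ring
  rcases h.G_nonneg.eq_or_lt with hG₀ | hG₀
  · rw [← hG₀, mul_zero]
    have := h.H_nonneg
    positivity
  · exact le_of_mul_le_mul_right (by rwa [mul_assoc, ← sq]) hG₀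

theorem rpow_half_mul_A_le {K : ℝ} (h : NeumannInequalities C₀ lam A B G H) (hC₀ : 0 ≤ C₀)
    (hlam : 0 ≤ lam) (hG : lam * G ≤ K * H) : lam ^ (1 / 2 : ℝ) * A ≤ √(C₀ * K) * H := by
  refine le_sqrt_mul_of_sq_le_mul_sq (mul_nonneg (by positivity) h.A_nonneg) h.H_nonneg ?_
  calc (lam ^ (1 / 2 : ℝ) * A) ^ 2 = lam * A ^ 2 := by
        rw [mul_pow, ← rpow_mul_natCast hlam]; norm_num
    _ ≤ C₀ * (lam * G) * H := by linarith [mul_le_mul_of_nonneg_left (h.sq_A_le hlam) hlam]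
    _ ≤ C₀ * (K * H) * H := by have := h.H_nonneg; gcongr
    _ = C₀ * K * H ^ 2 := by ring

theorem rpow_three_halves_mul_B_le {K : ℝ} (h : NeumannInequalities C₀ lam A B G H)
    (hC₀ : 0 ≤ C₀) (hlam : 0 ≤ lam) (hG : lam * G ≤ K * H) :
    lam ^ (3 / 2 : ℝ) * B ≤ √((C₀ + 1) * K) * H := by
  refine le_sqrt_mul_of_sq_le_mul_sq (mul_nonneg (by positivity) h.B_nonneg) h.H_nonneg ?_
  calc (lam ^ (3 / 2 : ℝ) * B) ^ 2 = lam * (lam * B) ^ 2 := by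
        rw [mul_pow, ← rpow_mul_natCast hlam]; norm_num; ring
    _ ≤ (C₀ + 1) * (lam * G) * H := by
        linarith [mul_le_mul_of_nonneg_left (h.sq_lam_mul_B_le hlam) hlam]
    _ ≤ (C₀ + 1) * (K * H) * H := by have := h.H_nonneg; gcongr
    _ = (C₀ + 1) * K * H ^ 2 := by ring

end NeumannInequalities

/-- Iteration lemma behind the Neumann resolvent boundary estimate: for every
`r < 1/2` there is `C_r` such that the three inequalities (energy, trace
interpolation, modulus of the energy identity) imply
`λ^{3r} B + λ^{r} A + λ^{2r} G ≤ C_r H`. -/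
theorem neumann_iteration_lemma (C₀ ω r : ℝ) (hC₀ : 0 < C₀) (hω : 0 < ω)
    (hr : r < 1 / 2) :
    ∃ C > (0 : ℝ), ∀ lam A B G H : ℝ, ω ≤ lam →
      0 ≤ A → 0 ≤ B → 0 ≤ G → 0 ≤ H →
      A ^ 2 + lam * B ^ 2 ≤ C₀ * G * H →
      G ≤ C₀ * (A ^ ((1 : ℝ) / 2) * B ^ ((1 : ℝ) / 2) + B) →
      lam ^ 2 * B ^ 2 ≤ A ^ 2 + G * H →
      lam ^ (3 * r) * B + lam ^ r * A + lam ^ (2 * r) * G ≤ C * H := by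
  have hK : 0 < C₀ ^ 2 * (2 * C₀ + 1 + 2 * (C₀ + 1) / ω) := by positivity
  set K := C₀ ^ 2 * (2 * C₀ + 1 + 2 * (C₀ + 1) / ω)
  refine ⟨ω ^ (3 * r - 3 / 2) * √((C₀ + 1) * K) + ω ^ (r - 1 / 2) * √(C₀ * K)
    + ω ^ (2 * r - 1) * K, by positivity, ?_⟩
  intro lam A B G H hlam hA hB hG hH h₁ h₂ h₃
  have h : NeumannInequalities C₀ lam A B G H := ⟨hA, hB, hG, hH, h₁, h₂, h₃⟩
  have hlam₀ : 0 ≤ lam := hω.le.trans hlam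
  have hGK : lam * G ≤ K * H := h.lam_mul_G_le hC₀.le hω hlam
  have hB' := rpow_mul_le_of_rpow_mul_le (p := 3 * r) hω hlam (by linarith) hB
    (h.rpow_three_halves_mul_B_le hC₀.le hlam₀ hGK)
  have hA' := rpow_mul_le_of_rpow_mul_le hω hlam hr.le hA
    (h.rpow_half_mul_A_le hC₀.le hlam₀ hGK)
  have hG' := rpow_mul_le_of_rpow_mul_le (p := 2 * r) hω hlam (by linarith) hG
    (by rwa [rpow_one] : lam ^ (1 : ℝ) * G ≤ K * H)
  calc _ ≤ ω ^ (3 * r - 3 / 2) * (√((C₀ + 1) * K) * H) + ω ^ (r - 1 / 2) * (√(C₀ * K) * H)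
        + ω ^ (2 * r - 1) * (K * H) := add_le_add (add_le_add hB' hA') hG'
    _ = _ := by ring
end
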